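/- Let Γ ↷ X and Λ ↷ Y be actions of countable discrete groups on second-countable locally compact Hausdorff spaces (not assumed topologically free), let h : X → Y be a homeomorphism and φ : X × Γ → Λ a continuous cocycle. Then the following are equivalent: (a) (h,φ) preserves stabilizers and there is a continuous map η : Y × Λ → Γ such that (h,φ,η) is a continuous orbit equivalence; (b) (h,φ) preserves essential stabilizers and there is a continuous map η : Y × Λ → Γ such that (h,φ,η) is a continuous orbit equivalence. -/

import Mathlib

open Set

variable {X Y Γ Λ : Type*}

/-- The stabilizer of `x` for a right action `a : X → Γ → X`. -/
def Stab (a : X → Γ → X) (x : X) : Set Γ := {γ | a x γ = x}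

/-- The essential stabilizer of `x`: elements acting as the identity on a
neighbourhood of `x`. -/
def StabEss [TopologicalSpace X] (a : X → Γ → X) (x : X) : Set Γ :=
  {γ | ∃ U : Set X, IsOpen U ∧ x ∈ U ∧ ∀ y ∈ U, a y γ = y}

/-- The action is topologically free if the points with trivial stabilizer are dense. -/
def TopFree [TopologicalSpace X] [One Γ] (a : X → Γ → X) : Prop :=
  Dense {x : X | ∀ γ : Γ, a x γ = x → γ = 1}

/-- `φ : X × Γ → Λ` is a cocycle for the action `a`. -/
def IsCocycle [Mul Γ] [Mul Λ] (a : X → Γ → X) (φ : X × Γ → Λ) : Prop :=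
  ∀ (x : X) (γ γ' : Γ), φ (x, γ * γ') = φ (x, γ) * φ (a x γ, γ')

/-- `(h, φ, η)` is a continuous orbit equivalence between the right actions
`a : X → Γ → X` and `b : Y → Λ → Y`. -/
def IsCOE [TopologicalSpace X] [TopologicalSpace Y] [TopologicalSpace Γ] [TopologicalSpace Λ]
    (a : X → Γ → X) (b : Y → Λ → Y) (h : X ≃ₜ Y) (φ : X × Γ → Λ) (η : Y × Λ → Γ) : Prop :=
  Continuous φ ∧ Continuous η ∧
    (∀ (x : X) (γ : Γ), h (a x γ) = b (h x) (φ (x, γ))) ∧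
    (∀ (y : Y) (lam : Λ), h.symm (b y lam) = a (h.symm y) (η (y, lam)))

/-- `(h, φ)` preserves stabilizers. -/
def PreservesStab [TopologicalSpace X] [TopologicalSpace Y]
    (a : X → Γ → X) (b : Y → Λ → Y) (h : X ≃ₜ Y) (φ : X × Γ → Λ) : Prop :=
  ∀ x : X, Set.BijOn (fun γ => φ (x, γ)) (Stab a x) (Stab b (h x))

/-- `(h, φ)` preserves essential stabilizers. -/
def PreservesStabEss [TopologicalSpace X] [TopologicalSpace Y]
    (a : X → Γ → X) (b : Y → Λ → Y) (h : X ≃ₜ Y) (φ : X × Γ → Λ) : Prop :=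
  ∀ x : X, Set.BijOn (fun γ => φ (x, γ)) (StabEss a x) (StabEss b (h x))

/-!
Since `φ` is locally constant in the space variable, `γ` fixes a neighbourhood of `x` iff
`φ(x, γ)` fixes a neighbourhood of `h x`. On `Stab(x)` the cocycle `φ(x, ·)` is a homomorphism into
`Stab(h x)`, and every `μ ∈ Stab(h x)` agrees with `φ(x, γ₀)`, where `γ₀ = η(h x, μ) ∈ Stab(x)`, up
to an essential stabilizer, because `η` is locally constant as well. So a bijection on stabilizers
restricts to one on essential stabilizers, and a bijection on essential stabilizers forces trivial
kernel and full image on stabilizers.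
-/

section Stabilizers

variable {a : X → Γ → X} {x : X}

theorem mem_stab_of_mem_stabEss [TopologicalSpace X] {γ : Γ} (hγ : γ ∈ StabEss a x) :
    γ ∈ Stab a x := by
  obtain ⟨U, -, hxU, hfix⟩ := hγ
  exact hfix x hxU

variable [Group Γ]

theorem one_mem_stabEss [TopologicalSpace X] (ha1 : ∀ x : X, a x 1 = x) : (1 : Γ) ∈ StabEss a x :=
  ⟨univ, isOpen_univ, mem_univ x, fun z _ => ha1 z⟩

theorem inv_mem_stabEss [TopologicalSpace X] (ha1 : ∀ x : X, a x 1 = x)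
    (ha2 : ∀ (x : X) (γ γ' : Γ), a (a x γ) γ' = a x (γ * γ')) {γ : Γ} (hγ : γ ∈ StabEss a x) :
    γ⁻¹ ∈ StabEss a x := by
  obtain ⟨U, hU, hxU, hfix⟩ := hγ
  refine ⟨U, hU, hxU, fun z hz => ?_⟩
  conv_lhs => rw [← hfix z hz]
  rw [ha2, mul_inv_cancel, ha1]

theorem mul_mem_stab (ha2 : ∀ (x : X) (γ γ' : Γ), a (a x γ) γ' = a x (γ * γ')) {γ γ' : Γ}
    (hγ : γ ∈ Stab a x) (hγ' : γ' ∈ Stab a x) : γ * γ' ∈ Stab a x := by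
  change a x (γ * γ') = x
  rw [← ha2, hγ, hγ']

variable [Group Λ] {φ : X × Γ → Λ}

theorem IsCocycle.map_one (ha1 : ∀ x : X, a x 1 = x) (hφ : IsCocycle a φ) : φ (x, 1) = 1 := by
  have h := hφ x 1 1
  rw [one_mul, ha1] at h
  exact left_eq_mul.mp h

theorem IsCocycle.map_mul_of_mem_stab (hφ : IsCocycle a φ) {γ : Γ} (hγ : γ ∈ Stab a x) (γ' : Γ) :
    φ (x, γ * γ') = φ (x, γ) * φ (x, γ') := by
  rw [hφ, hγ]

end Stabilizers

namespace IsCOE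

variable [TopologicalSpace X] [TopologicalSpace Y] [TopologicalSpace Γ] [TopologicalSpace Λ]
  {a : X → Γ → X} {b : Y → Λ → Y} {h : X ≃ₜ Y} {φ : X × Γ → Λ} {η : Y × Λ → Γ} {x : X}

theorem map_mem_stab (hcoe : IsCOE a b h φ η) {γ : Γ} (hγ : γ ∈ Stab a x) :
    φ (x, γ) ∈ Stab b (h x) := by
  change b (h x) (φ (x, γ)) = h x
  rw [← hcoe.2.2.1, hγ]

theorem isOpen_setOf_map_eq [DiscreteTopology Λ] (hcoe : IsCOE a b h φ η) (γ : Γ) (lam : Λ) :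
    IsOpen {z : X | φ (z, γ) = lam} :=
  (isOpen_discrete {lam}).preimage (hcoe.1.comp (.prodMk continuous_id continuous_const))

theorem isOpen_setOf_inv_map_eq [DiscreteTopology Γ] (hcoe : IsCOE a b h φ η) (lam : Λ) (γ : Γ) :
    IsOpen {z : Y | η (z, lam) = γ} :=
  (isOpen_discrete {γ}).preimage (hcoe.2.1.comp (.prodMk continuous_id continuous_const))

theorem mem_stabEss_iff [DiscreteTopology Λ] (hcoe : IsCOE a b h φ η) (γ : Γ) :
    γ ∈ StabEss a x ↔ φ (x, γ) ∈ StabEss b (h x) := by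
  have hequiv := hcoe.2.2.1
  have hW := hcoe.isOpen_setOf_map_eq γ (φ (x, γ))
  constructor
  · rintro ⟨U, hU, hxU, hfix⟩
    refine ⟨h '' (U ∩ {z | φ (z, γ) = φ (x, γ)}), h.isOpenMap _ (hU.inter hW),
      mem_image_of_mem h ⟨hxU, rfl⟩, ?_⟩
    rintro _ ⟨z, ⟨hzU, hzφ⟩, rfl⟩
    rw [← hzφ, ← hequiv, hfix z hzU]
  · rintro ⟨V, hV, hxV, hfix⟩
    refine ⟨{z | φ (z, γ) = φ (x, γ)} ∩ h ⁻¹' V, hW.inter (hV.preimage h.continuous),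
      ⟨rfl, hxV⟩, ?_⟩
    rintro z ⟨hzφ, hzV⟩
    apply h.injective
    rw [hequiv, hzφ, hfix (h z) hzV]

theorem exists_mem_stab_mul_inv_mem_stabEss [Group Γ] [DiscreteTopology Γ] [Group Λ]
    [DiscreteTopology Λ] (hb1 : ∀ y : Y, b y 1 = y)
    (hb2 : ∀ (y : Y) (lam mu : Λ), b (b y lam) mu = b y (lam * mu)) (hcoe : IsCOE a b h φ η)
    {mu : Λ} (hmu : mu ∈ Stab b (h x)) :
    ∃ γ ∈ Stab a x, φ (x, γ) * mu⁻¹ ∈ StabEss b (h x) := by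
  have hequiv := hcoe.2.2.1
  have hequiv_symm := hcoe.2.2.2
  set γ₀ := η (h x, mu)
  have hγ₀ : a x γ₀ = x := by
    have := hequiv_symm (h x) mu
    rwa [hmu, h.symm_apply_apply, eq_comm] at this
  refine ⟨γ₀, hγ₀, {z | η (z, mu) = γ₀} ∩ h.symm ⁻¹' {z | φ (z, γ₀) = φ (x, γ₀)},
    (hcoe.isOpen_setOf_inv_map_eq mu γ₀).inter
      ((hcoe.isOpen_setOf_map_eq γ₀ _).preimage h.symm.continuous),
    ⟨rfl, by simp⟩, ?_⟩
  rintro z ⟨hzη, hzφ⟩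
  have hsame : b z mu = b z (φ (x, γ₀)) := by
    rw [← h.apply_symm_apply (b z mu), hequiv_symm, hzη, hequiv, h.apply_symm_apply, hzφ]
  rw [← hb2, ← hsame, hb2, mul_inv_cancel, hb1]

theorem preservesStabEss_of_preservesStab [DiscreteTopology Λ] (hcoe : IsCOE a b h φ η)
    (hstab : PreservesStab a b h φ) : PreservesStabEss a b h φ := by
  intro x
  refine ⟨fun γ hγ => (hcoe.mem_stabEss_iff γ).mp hγ,
    (hstab x).injOn.mono fun _ => mem_stab_of_mem_stabEss, fun mu hmu => ?_⟩
  obtain ⟨γ, -, rfl⟩ := (hstab x).surjOn (mem_stab_of_mem_stabEss hmu)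
  exact ⟨γ, (hcoe.mem_stabEss_iff γ).mpr hmu, rfl⟩

variable [Group Γ] [Group Λ]

theorem injOn_stab_of_injOn_stabEss [DiscreteTopology Λ] (ha1 : ∀ x : X, a x 1 = x)
    (hb1 : ∀ y : Y, b y 1 = y) (hcoe : IsCOE a b h φ η) (hφ : IsCocycle a φ)
    (hinj : InjOn (fun γ => φ (x, γ)) (StabEss a x)) :
    InjOn (fun γ => φ (x, γ)) (Stab a x) := by
  intro γ hγ γ' hγ' (heq : φ (x, γ) = φ (x, γ'))
  have hσ : φ (x, γ⁻¹ * γ') = 1 := by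
    have := hφ.map_mul_of_mem_stab hγ (γ⁻¹ * γ')
    rw [mul_inv_cancel_left] at this
    exact mul_eq_left.mp (this.symm.trans heq.symm)
  have hσess : γ⁻¹ * γ' ∈ StabEss a x :=
    (hcoe.mem_stabEss_iff _).mpr (hσ ▸ one_mem_stabEss hb1)
  have : γ⁻¹ * γ' = 1 :=
    hinj hσess (one_mem_stabEss ha1) (hσ.trans (hφ.map_one ha1).symm)
  exact inv_mul_eq_one.mp this

theorem surjOn_stab_of_surjOn_stabEss [DiscreteTopology Γ] [DiscreteTopology Λ]
    (ha2 : ∀ (x : X) (γ γ' : Γ), a (a x γ) γ' = a x (γ * γ')) (hb1 : ∀ y : Y, b y 1 = y)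
    (hb2 : ∀ (y : Y) (lam mu : Λ), b (b y lam) mu = b y (lam * mu)) (hcoe : IsCOE a b h φ η)
    (hφ : IsCocycle a φ) (hsurj : SurjOn (fun γ => φ (x, γ)) (StabEss a x) (StabEss b (h x))) :
    SurjOn (fun γ => φ (x, γ)) (Stab a x) (Stab b (h x)) := by
  intro mu hmu
  obtain ⟨γ₀, hγ₀, hess⟩ := hcoe.exists_mem_stab_mul_inv_mem_stabEss hb1 hb2 hmu
  obtain ⟨δ, hδ, hδφ⟩ := hsurj (inv_mem_stabEss hb1 hb2 hess)
  refine ⟨δ * γ₀, mul_mem_stab ha2 (mem_stab_of_mem_stabEss hδ) hγ₀, ?_⟩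
  simp only at hδφ ⊢
  rw [hφ.map_mul_of_mem_stab (mem_stab_of_mem_stabEss hδ), hδφ, mul_inv_rev, inv_inv,
    inv_mul_cancel_right]

theorem preservesStab_of_preservesStabEss [DiscreteTopology Γ] [DiscreteTopology Λ]
    (ha1 : ∀ x : X, a x 1 = x) (ha2 : ∀ (x : X) (γ γ' : Γ), a (a x γ) γ' = a x (γ * γ'))
    (hb1 : ∀ y : Y, b y 1 = y) (hb2 : ∀ (y : Y) (lam mu : Λ), b (b y lam) mu = b y (lam * mu))
    (hcoe : IsCOE a b h φ η) (hφ : IsCocycle a φ) (hess : PreservesStabEss a b h φ) :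
    PreservesStab a b h φ := fun x =>
  ⟨fun _ => hcoe.map_mem_stab, hcoe.injOn_stab_of_injOn_stabEss ha1 hb1 hφ (hess x).injOn,
    hcoe.surjOn_stab_of_surjOn_stabEss ha2 hb1 hb2 hφ (hess x).surjOn⟩

end IsCOE

theorem stmt4_general [TopologicalSpace X] [TopologicalSpace Y]
    [Group Γ] [TopologicalSpace Γ] [DiscreteTopology Γ]
    [Group Λ] [TopologicalSpace Λ] [DiscreteTopology Λ]
    (a : X → Γ → X) (b : Y → Λ → Y)
    (ha1 : ∀ x : X, a x 1 = x) (ha2 : ∀ (x : X) (γ γ' : Γ), a (a x γ) γ' = a x (γ * γ'))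
    (hb1 : ∀ y : Y, b y 1 = y) (hb2 : ∀ (y : Y) (lam mu : Λ), b (b y lam) mu = b y (lam * mu))
    (h : X ≃ₜ Y) (φ : X × Γ → Λ)
    (hφcoc : IsCocycle a φ) :
    (PreservesStab a b h φ ∧ ∃ η : Y × Λ → Γ, IsCOE a b h φ η) ↔
      (PreservesStabEss a b h φ ∧ ∃ η : Y × Λ → Γ, IsCOE a b h φ η) := by
  constructor
  · rintro ⟨hstab, η, hcoe⟩
    exact ⟨hcoe.preservesStabEss_of_preservesStab hstab, η, hcoe⟩
  · rintro ⟨hess, η, hcoe⟩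
    exact ⟨hcoe.preservesStab_of_preservesStabEss ha1 ha2 hb1 hb2 hφcoc hess, η, hcoe⟩

theorem stmt4 [TopologicalSpace X] [SecondCountableTopology X] [LocallyCompactSpace X] [T2Space X]
    [TopologicalSpace Y] [SecondCountableTopology Y] [LocallyCompactSpace Y] [T2Space Y]
    [Group Γ] [Countable Γ] [TopologicalSpace Γ] [DiscreteTopology Γ]
    [Group Λ] [Countable Λ] [TopologicalSpace Λ] [DiscreteTopology Λ]
    (a : X → Γ → X) (b : Y → Λ → Y)
    (ha1 : ∀ x : X, a x 1 = x) (ha2 : ∀ (x : X) (γ γ' : Γ), a (a x γ) γ' = a x (γ * γ'))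
    (hacont : Continuous fun p : X × Γ => a p.1 p.2)
    (hb1 : ∀ y : Y, b y 1 = y) (hb2 : ∀ (y : Y) (lam mu : Λ), b (b y lam) mu = b y (lam * mu))
    (hbcont : Continuous fun p : Y × Λ => b p.1 p.2)
    (h : X ≃ₜ Y) (φ : X × Γ → Λ)
    (hφ : Continuous φ) (hφcoc : IsCocycle a φ) :
    (PreservesStab a b h φ ∧ ∃ η : Y × Λ → Γ, IsCOE a b h φ η) ↔
      (PreservesStabEss a b h φ ∧ ∃ η : Y × Λ → Γ, IsCOE a b h φ η) :=
  stmt4_general a b ha1 ha2 hb1 hb2 h φ hφcoc
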